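/- arXiv:1508.02565 — 3 statements merged into one kernel-verified Lean document; each statement's English description precedes it below -/
import Mathlib

section
/- On the pp-wave background, if smooth complex functions P⁰, P¹, Q̄⁰, Q̄¹ satisfy the Dirac system DP⁰ + δ̄P¹ = iμQ̄¹, ΔP¹ + δP⁰ = −iμQ̄⁰, DQ̄⁰ + δQ̄¹ = −iμP¹, ΔQ̄¹ + δ̄Q̄⁰ = iμP⁰, and the operators satisfy δ̄Δ − Δδ̄ = −νD (with all other commutators of D, Δ, δ, δ̄ vanishing and Dδ̄ = δ̄D, DΔ = ΔD, δδ̄ = δ̄δ), then P¹ satisfies the decoupled equation (DΔ − δδ̄ + μ²)P¹ = 0. -/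
/-- on the pp-wave background, the Dirac system
DP⁰ + δ̄P¹ = iμQ̄¹, ΔP¹ + δP⁰ = −iμQ̄⁰, DQ̄⁰ + δQ̄¹ = −iμP¹, ΔQ̄¹ + δ̄Q̄⁰ = iμP⁰,
together with the commutators δ̄Δ − Δδ̄ = −νD, DΔ = ΔD, δδ̄ = δ̄δ, Dδ = δD,
Dδ̄ = δ̄D, implies the decoupled equation (DΔ − δδ̄ + μ²)P¹ = 0. -/
theorem dirac_P1_decoupling
    {X : Type*} (μ : ℝ) (ν : X → ℂ)
    (D Δ δ δb : (X → ℂ) →ₗ[ℂ] (X → ℂ))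
    (hDΔ : ∀ f, D (Δ f) = Δ (D f))
    (hδδb : ∀ f, δ (δb f) = δb (δ f))
    (hDδ : ∀ f, D (δ f) = δ (D f))
    (hDδb : ∀ f, D (δb f) = δb (D f))
    (hδbΔ : ∀ f, δb (Δ f) - Δ (δb f) = -(ν * D f))
    (P0 P1 Q0b Q1b : X → ℂ)
    (h1 : D P0 + δb P1 = (Complex.I * (μ : ℂ)) • Q1b)
    (h2 : Δ P1 + δ P0 = -((Complex.I * (μ : ℂ)) • Q0b))
    (h3 : D Q0b + δ Q1b = -((Complex.I * (μ : ℂ)) • P1))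
    (h4 : Δ Q1b + δb Q0b = (Complex.I * (μ : ℂ)) • P0) :
    D (Δ P1) - δ (δb P1) + ((μ : ℂ) ^ 2) • P1 = 0 := by
  have e2 := congrArg D h2
  have e1 := congrArg δ h1
  simp only [map_add, map_neg, map_smul, hDδ] at e2 e1
  have key : D (Δ P1) - δ (δb P1)
      = -((Complex.I * (μ : ℂ)) • (D Q0b + δ Q1b)) := by
    rw [smul_add, neg_add]
    linear_combination (norm := module) e2 - e1
  rw [h3, smul_neg, neg_neg, smul_smul] at key
  rw [key]
  match_scalars
  ring_nf
  simp [Complex.I_sq]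
end

section
/- On the pp-wave background with operator commutators DΔ = ΔD, δδ̄ = δ̄δ, Dδ = δD, Dδ̄ = δ̄D, and (δΔ − Δδ) = −ν̄D, the Dirac component Q̄¹ satisfies (DΔ − δ̄δ + μ²)Q̄¹ = 0 whenever (P⁰,P¹,Q̄⁰,Q̄¹) solve the pp-wave Dirac system DP⁰ + δ̄P¹ = iμQ̄¹, ΔP¹ + δP⁰ = −iμQ̄⁰, DQ̄⁰ + δQ̄¹ = −iμP¹, ΔQ̄¹ + δ̄Q̄⁰ = iμP⁰. -/
/-- on the pp-wave background, the Dirac system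
DP⁰ + δ̄P¹ = iμQ̄¹, ΔP¹ + δP⁰ = −iμQ̄⁰, DQ̄⁰ + δQ̄¹ = −iμP¹, ΔQ̄¹ + δ̄Q̄⁰ = iμP⁰,
together with the commutators DΔ = ΔD, δδ̄ = δ̄δ, Dδ = δD, Dδ̄ = δ̄D and
δΔ − Δδ = −ν̄D, implies the decoupled equation (DΔ − δ̄δ + μ²)Q̄¹ = 0. -/
theorem dirac_Q1bar_decoupling
    {X : Type*} (μ : ℝ) (νb : X → ℂ)
    (D Δ δ δb : (X → ℂ) →ₗ[ℂ] (X → ℂ))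
    (hDΔ : ∀ f, D (Δ f) = Δ (D f))
    (hδδb : ∀ f, δ (δb f) = δb (δ f))
    (hDδ : ∀ f, D (δ f) = δ (D f))
    (hDδb : ∀ f, D (δb f) = δb (D f))
    (hδΔ : ∀ f, δ (Δ f) - Δ (δ f) = -(νb * D f))
    (P0 P1 Q0b Q1b : X → ℂ)
    (h1 : D P0 + δb P1 = (Complex.I * (μ : ℂ)) • Q1b)
    (h2 : Δ P1 + δ P0 = -((Complex.I * (μ : ℂ)) • Q0b))
    (h3 : D Q0b + δ Q1b = -((Complex.I * (μ : ℂ)) • P1))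
    (h4 : Δ Q1b + δb Q0b = (Complex.I * (μ : ℂ)) • P0) :
    D (Δ Q1b) - δb (δ Q1b) + ((μ : ℂ) ^ 2) • Q1b = 0 := by
  set c : ℂ := Complex.I * (μ : ℂ) with hc
  have e1 : D (Δ Q1b) + D (δb Q0b) = c • D P0 := by
    rw [← map_add, h4, map_smul]
  have e2 : δb (D Q0b) + δb (δ Q1b) = -(c • δb P1) := by
    rw [← map_add, h3, map_neg, map_smul]
  have key : D (Δ Q1b) - δb (δ Q1b) = c • (D P0 + δb P1) := by
    have h := hDδb Q0b
    rw [smul_add]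
    have : D (Δ Q1b) = c • D P0 - D (δb Q0b) := by
      rw [← e1]; ring
    rw [this, h]
    have : δb (δ Q1b) = -(c • δb P1) - δb (D Q0b) := by
      rw [← e2]; ring
    rw [this]; ring
  rw [key, h1, smul_smul]
  have hcc : c * c = -((μ : ℂ) ^ 2) := by
    rw [hc]; ring_nf; rw [Complex.I_sq]; ring
  rw [hcc]
  module
end

section
/- If l, n, m, m̄ is an NP null tetrad with l real null and covariantly constant (so κ=σ=ρ=τ=0 and ε+ε̄=γ+γ̄=ᾱ+β=0), then for the Proca field A = ξl + ηn + ζ̄m + ζm̄ the contraction l_a(∇ᵇ∇_b A^a + m²A^a) = 0 yields a second-order equation involving η alone: [DΔ + ΔD − δδ̄ − δ̄δ + (μ+μ̄)D + (2α−π)δ + (2ᾱ−π̄)δ̄ + m²]η = 0, i.e. no ξ, ζ, ζ̄ terms appear. -/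
/-- if l is covariantly constant (so κ=σ=ρ=τ=0 and
ε+ε̄ = γ+γ̄ = ᾱ+β = 0, and the tetrad derivative formulas (13) hold),
then for A = ξl + ηn + ζ̄m + ζm̄ the contraction l_a(∇ᵇ∇_b A^a + m²A^a)
equals [DΔ + ΔD − δδ̄ − δ̄δ + (μ+μ̄)D + (2α−π)δ + (2ᾱ−π̄)δ̄ + m²]η,
an expression in η alone (no ξ, ζ, ζ̄ terms appear).
Here F is the (commutative) algebra of scalar fields, V the module of
vector fields, D, Δ, δ, δ̄ the NP directional derivatives (acting on V, with
scalar counterparts dD, dΔ, dδ, dδ̄), and l_a∇ᵇ∇_bA^a is expanded over the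
tetrad as in the paper's appendix:
∇ᵇ∇_b = (nᵇD + lᵇΔ − m̄ᵇδ − mᵇδ̄)(n_bD + l_bΔ − m̄_bδ − m_bδ̄). -/
theorem proca_eta_contraction_decoupled
    {F V : Type*} [CommRing F] [Algebra ℂ F] [AddCommGroup V] [Module F V]
    (g : V →ₗ[F] V →ₗ[F] F)
    (l n m mb : V)
    (D Δ δ δb : V → V) (dD dΔ dδ dδb : F → F)
    -- metric compatibility of the directional derivatives
    (hgD : ∀ X Y, dD (g X Y) = g (D X) Y + g X (D Y))
    (hgΔ : ∀ X Y, dΔ (g X Y) = g (Δ X) Y + g X (Δ Y))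
    (hgδ : ∀ X Y, dδ (g X Y) = g (δ X) Y + g X (δ Y))
    (hgδb : ∀ X Y, dδb (g X Y) = g (δb X) Y + g X (δb Y))
    -- additivity and Leibniz rules
    (hDadd : ∀ X Y : V, D (X + Y) = D X + D Y)
    (hΔadd : ∀ X Y : V, Δ (X + Y) = Δ X + Δ Y)
    (hδadd : ∀ X Y : V, δ (X + Y) = δ X + δ Y)
    (hδbadd : ∀ X Y : V, δb (X + Y) = δb X + δb Y)
    (hDs : ∀ (f : F) (X : V), D (f • X) = dD f • X + f • D X)
    (hΔs : ∀ (f : F) (X : V), Δ (f • X) = dΔ f • X + f • Δ X)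
    (hδs : ∀ (f : F) (X : V), δ (f • X) = dδ f • X + f • δ X)
    (hδbs : ∀ (f : F) (X : V), δb (f • X) = dδb f • X + f • δb X)
    -- NP tetrad inner products
    (hsymm : ∀ X Y, g X Y = g Y X)
    (h1 : g l n = 1) (h2 : g m mb = -1)
    (h3 : g l l = 0) (h4 : g n n = 0) (h5 : g m m = 0) (h6 : g mb mb = 0)
    (h7 : g l m = 0) (h8 : g l mb = 0) (h9 : g n m = 0) (h10 : g n mb = 0)
    -- spin coefficients surviving when ∇l = 0 (bars denoted by suffix b)
    (π πb ν νb μ μb lam lamb α αb ε εb γ γb : F)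
    -- l covariantly constant
    (hDl : D l = 0) (hΔl : Δ l = 0) (hδl : δ l = 0) (hδbl : δb l = 0)
    -- tetrad derivative formulas (13) (and their complex conjugates)
    (hDn : D n = π • m + πb • mb)
    (hΔn : Δ n = ν • m + νb • mb)
    (hδn : δ n = μ • m + lamb • mb)
    (hδbn : δb n = lam • m + μb • mb)
    (hDm : D m = πb • l + (2 * ε) • m)
    (hΔm : Δ m = νb • l + (2 * γ) • m)
    (hδm : δ m = lamb • l - (2 * αb) • m)
    (hδbm : δb m = μb • l + (2 * α) • m)
    (hDmb : D mb = π • l + (2 * εb) • mb)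
    (hΔmb : Δ mb = ν • l + (2 * γb) • mb)
    (hδmb : δ mb = μ • l + (2 * αb) • mb)
    (hδbmb : δb mb = lam • l - (2 * α) • mb)
    -- the Proca field and its tetrad components
    (ξ η ζ ζb msq : F) (A : V)
    (hA : A = ξ • l + η • n + ζb • m + ζ • mb)
    -- the wave operator ∇ᵇ∇_b A expanded over the NP tetrad
    (boxA : V)
    (hbox : boxA =
      D (Δ A) + Δ (D A) - δ (δb A) - δb (δ A)
      + g n (D n) • D A + g n (D l) • Δ A - g n (D mb) • δ A - g n (D m) • δb A
      + g l (Δ n) • D A + g l (Δ l) • Δ A - g l (Δ mb) • δ A - g l (Δ m) • δb A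
      - (g mb (δ n) • D A + g mb (δ l) • Δ A - g mb (δ mb) • δ A - g mb (δ m) • δb A)
      - (g m (δb n) • D A + g m (δb l) • Δ A - g m (δb mb) • δ A - g m (δb m) • δb A)) :
    g l (boxA + msq • A)
      = dD (dΔ η) + dΔ (dD η) - dδ (dδb η) - dδb (dδ η)
        + (μ + μb) * dD η + (2 * α - π) * dδ η + (2 * αb - πb) * dδb η
        + msq * η := by

  have h1' : g n l = 1 := by rw [hsymm]; exact h1
  have h2' : g mb m = -1 := by rw [hsymm]; exact h2
  have h7' : g m l = 0 := by rw [hsymm]; exact h7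
  have h8' : g mb l = 0 := by rw [hsymm]; exact h8
  have h9' : g m n = 0 := by rw [hsymm]; exact h9
  have h10' : g mb n = 0 := by rw [hsymm]; exact h10
  subst hA hbox
  simp only [sub_eq_add_neg, ← neg_smul, hDadd, hΔadd, hδadd, hδbadd, hDs, hΔs, hδs, hδbs,
    hDl, hΔl, hδl, hδbl, hDn, hΔn, hδn, hδbn, hDm, hΔm, hδm, hδbm,
    hDmb, hΔmb, hδmb, hδbmb, smul_add, smul_sub, smul_smul, smul_zero,
    add_zero, zero_add, map_add, map_sub, map_neg, map_smul, map_zero, zero_smul,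
    smul_eq_mul, h1, h2, h3, h4, h5, h6, h7, h8, h9, h10,
    h1', h2', h7', h8', h9', h10']
  ring
end
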